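/- arXiv:2109.11466 — 2 statements merged into one kernel-verified Lean document; each statement's English description precedes it below -/
import Mathlib

section
/- (Expected push from a dyadic scale, lower bound.) There exists an absolute constant C > 0 such that for every integer n ≥ 1 and every j ∈ ℤ with 2^j ≥ 1/√n, if Z is a random variable uniformly distributed on the interval [2^j, 2^{j+1}], then E[ √(Z² + 1/n) − Z ] ≥ (log 2)/(n · 2^{j+1}) − C/(n² · 2^{3j}). -/
/-!
The push `√(z² + b) - z` is bounded below by its second-order Taylor expansion
`b/(2z) - b²/(8z³)` in `b`. Averaging over `[a, 2a]`, the leading term integrates to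
`(b log 2)/2`, because `∫_a^{2a} dz/z = log 2` at every scale, while the cubic error term is
at most `b²/(8a³)` on the whole interval.
-/

open MeasureTheory ProbabilityTheory Filter Set

/-- `Z` is uniformly distributed on the dyadic interval `[2^j, 2^(j+1)]`
(of length `2^j`) under `P`. -/
def UniformOnDyadic {Ω : Type*} [MeasurableSpace Ω] (P : Measure Ω) (Z : Ω → ℝ)
    (j : ℤ) : Prop :=
  Measurable Z ∧
    P.map Z = (ENNReal.ofReal ((2 : ℝ) ^ j))⁻¹ •
      volume.restrict (Set.Icc ((2 : ℝ) ^ j) ((2 : ℝ) ^ (j + 1)))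

lemma le_sqrt_sq_add_sub_self {x b : ℝ} (hx : 0 < x) (hb : 0 ≤ b) (hbx : b ≤ 8 * x ^ 2) :
    b / (2 * x) - b ^ 2 / (8 * x ^ 3) ≤ √(x ^ 2 + b) - x := by
  suffices (x + b / (2 * x) - b ^ 2 / (8 * x ^ 3)) ^ 2 ≤ x ^ 2 + b by
    linarith [Real.le_sqrt_of_sq_le this]
  have hx3 : 0 < 8 * x ^ 3 := by positivity
  -- `(8x⁴ + 4bx² - b²)² - 64x⁶(x² + b) = b³(b - 8x²)`
  rw [show x + b / (2 * x) - b ^ 2 / (8 * x ^ 3)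
      = (8 * x ^ 4 + 4 * b * x ^ 2 - b ^ 2) / (8 * x ^ 3) by field_simp; ring,
    div_pow, div_le_iff₀ (by positivity)]
  nlinarith [mul_nonneg (pow_nonneg hb 3) (sub_nonneg.2 hbx)]

lemma le_integral_sqrt_sq_add_sub_self {a b : ℝ} (ha : 0 < a) (hb : 0 ≤ b)
    (hba : b ≤ 8 * a ^ 2) :
    b * Real.log 2 / 2 - b ^ 2 / (8 * a ^ 2) ≤ ∫ x in a..2 * a, (√(x ^ 2 + b) - x) := by
  have hpos : ∀ x ∈ uIcc a (2 * a), 0 < x := by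
    intro x hx
    rw [uIcc_of_le (by linarith)] at hx
    exact ha.trans_le hx.1
  have hlower : ∀ x ∈ Icc a (2 * a), b / 2 * x⁻¹ - b ^ 2 / (8 * a ^ 3) ≤ √(x ^ 2 + b) - x := by
    intro x ⟨hax, _⟩
    have hx := ha.trans_le hax
    have hcube : b ^ 2 / (8 * x ^ 3) ≤ b ^ 2 / (8 * a ^ 3) := by gcongr
    have := le_sqrt_sq_add_sub_self hx hb (hba.trans (by nlinarith))
    have hrecip : b / 2 * x⁻¹ = b / (2 * x) := by field_simp
    linarith
  have hinv : IntervalIntegrable (fun x : ℝ ↦ x⁻¹) volume a (2 * a) :=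
    intervalIntegral.intervalIntegrable_inv (fun x hx ↦ (hpos x hx).ne') continuousOn_id
  have hmono := intervalIntegral.integral_mono_on (by linarith)
    ((hinv.const_mul (b / 2)).sub intervalIntegrable_const)
    (by apply Continuous.intervalIntegrable; fun_prop) hlower
  rw [intervalIntegral.integral_sub (hinv.const_mul _) intervalIntegrable_const,
    intervalIntegral.integral_const_mul, integral_inv_of_pos ha (by linarith),
    intervalIntegral.integral_const, mul_div_cancel_right₀ _ ha.ne', smul_eq_mul] at hmono
  convert hmono using 1
  field_simp
  ring

lemma UniformOnDyadic.integral_comp {Ω : Type*} [MeasurableSpace Ω] {P : Measure Ω}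
    {Z : Ω → ℝ} {j : ℤ} (hZ : UniformOnDyadic P Z j) {f : ℝ → ℝ} (hf : Measurable f) :
    ∫ ω, f (Z ω) ∂P = ((2 : ℝ) ^ j)⁻¹ * ∫ x in (2 : ℝ) ^ j..(2 : ℝ) ^ (j + 1), f x := by
  have hle : (2 : ℝ) ^ j ≤ (2 : ℝ) ^ (j + 1) := zpow_le_zpow_right₀ (by norm_num) (by omega)
  rw [← integral_map hZ.1.aemeasurable hf.aestronglyMeasurable, hZ.2, integral_smul_measure,
    ENNReal.toReal_inv, ENNReal.toReal_ofReal (zpow_pos two_pos j).le, smul_eq_mul,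
    integral_Icc_eq_integral_Ioc, intervalIntegral.integral_of_le hle]

/-- Expected push from a dyadic scale, lower bound. There is an
absolute constant `C > 0` such that if `2^j ≥ 1/√n` and `Z` is uniform on
`[2^j, 2^(j+1)]`, then `E[√(Z² + 1/n) - Z] ≥ (log 2)/(n 2^(j+1)) - C/(n² 2^(3j))`. -/
theorem statement7 :
    ∃ C : ℝ, 0 < C ∧
    ∀ (n : ℕ), 1 ≤ n → ∀ (j : ℤ), 1 / Real.sqrt n ≤ (2 : ℝ) ^ j →
    ∀ (Ω : Type) (mΩ : MeasurableSpace Ω) (P : Measure Ω), IsProbabilityMeasure P →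
    ∀ (Z : Ω → ℝ), UniformOnDyadic P Z j →
      Real.log 2 / (n * (2 : ℝ) ^ (j + 1)) - C / (n ^ 2 * (2 : ℝ) ^ (3 * j))
        ≤ ∫ ω, (Real.sqrt (Z ω ^ 2 + 1 / n) - Z ω) ∂P := by
  refine ⟨1 / 8, by norm_num, fun n hn j hj Ω _ P _ Z hZ ↦ ?_⟩
  set a : ℝ := (2 : ℝ) ^ j
  have ha : 0 < a := zpow_pos two_pos j
  have hn0 : (0 : ℝ) < n := by exact_mod_cast hn
  have hna : 1 / (n : ℝ) ≤ a ^ 2 := by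
    calc 1 / (n : ℝ) = (1 / √n) ^ 2 := by rw [div_pow, one_pow, Real.sq_sqrt hn0.le]
      _ ≤ a ^ 2 := pow_le_pow_left₀ (by positivity) hj 2
  have hbound := le_integral_sqrt_sq_add_sub_self ha (by positivity : 0 ≤ 1 / (n : ℝ))
    (by nlinarith [sq_nonneg a])
  have h2a : (2 : ℝ) ^ (j + 1) = 2 * a := by rw [zpow_add_one₀ two_ne_zero, mul_comm]
  have ha3 : (2 : ℝ) ^ (3 * j) = a ^ 3 := by rw [mul_comm, zpow_mul, zpow_ofNat]
  rw [hZ.integral_comp (f := fun x ↦ √(x ^ 2 + 1 / n) - x) (by fun_prop), h2a, ha3]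
  calc Real.log 2 / (n * (2 * a)) - 1 / 8 / (n ^ 2 * a ^ 3)
      = a⁻¹ * ((1 / n) * Real.log 2 / 2 - (1 / n) ^ 2 / (8 * a ^ 2)) := by
        field_simp
    _ ≤ a⁻¹ * ∫ x in a..2 * a, (√(x ^ 2 + 1 / n) - x) :=
        mul_le_mul_of_nonneg_left hbound (inv_nonneg.2 ha.le)
end

section
/- (Deterministic bound on the time to reach minimal length.) There exists n₀ (an absolute constant) such that for all integers n ≥ n₀, in the constrained HL(0) interval process almost surely T_1 ≤ (log n)⁷, where T_1 = inf{i ≥ 1 : λ_i ≥ (log n)³/√n}. -/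
/-!
Each arrival raises the squared length of the interval by at least `4/n`: if the particle
splits `[-L, R]` into pieces of lengths `a` and `b`, the new length is
`√(a² + 1/n) + √(b² + 1/n)`, whose square is at least `(a + b)² + 4/n`. Hence deterministically
`λ_k² ≥ 4k/n`, and `λ_i ≥ (log n)³/√n` already at `i = ⌈(log n)⁶/4⌉ ≤ (log n)⁷`.
-/

open MeasureTheory ProbabilityTheory Filter Set

/-- The constrained HL(0) interval process on the upper half-plane:
`L k`/`R k` are the left/right endpoints of the interval after `k` arrivals,
`x (k+1)` is the attachment location of the `(k+1)`-th particle, uniformly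
distributed on `[-L k, R k]` conditionally on `F k`. -/
structure ConstrainedHL {Ω : Type*} {mΩ : MeasurableSpace Ω} (P : Measure Ω) (n : ℕ)
    (F : Filtration ℕ mΩ) (L R x : ℕ → Ω → ℝ) : Prop where
  isProb : IsProbabilityMeasure P
  init_L : ∀ ω, L 1 ω = 1 / Real.sqrt n
  init_R : ∀ ω, R 1 ω = 1 / Real.sqrt n
  meas_L : ∀ k, Measurable[F k] (L k)
  meas_R : ∀ k, Measurable[F k] (R k)
  meas_x : ∀ k, Measurable[F (k + 1)] (x (k + 1))
  mem_interval : ∀ k, 1 ≤ k → ∀ ω, x (k + 1) ω ∈ Set.Icc (-(L k ω)) (R k ω)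
  recur_R : ∀ k, 1 ≤ k → ∀ ω,
      R (k + 1) ω = x (k + 1) ω + Real.sqrt ((R k ω - x (k + 1) ω) ^ 2 + 1 / n)
  recur_L : ∀ k, 1 ≤ k → ∀ ω,
      L (k + 1) ω = -x (k + 1) ω + Real.sqrt ((L k ω + x (k + 1) ω) ^ 2 + 1 / n)
  uniform : ∀ k, 1 ≤ k → ∀ g : ℝ → ℝ, Measurable g → (∃ M, ∀ u, |g u| ≤ M) →
      P[(fun ω => g (x (k + 1) ω))|F k]
        =ᵐ[P] fun ω => (∫ u in (-(L k ω))..(R k ω), g u) / (L k ω + R k ω)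

lemma sq_add_add_four_mul_le_sq_sqrt_add_sqrt {a b c : ℝ} (hc : 0 ≤ c) :
    (a + b) ^ 2 + 4 * c ≤ (√(a ^ 2 + c) + √(b ^ 2 + c)) ^ 2 := by
  have hsa : √(a ^ 2 + c) ^ 2 = a ^ 2 + c := Real.sq_sqrt (by positivity)
  have hsb : √(b ^ 2 + c) ^ 2 = b ^ 2 + c := Real.sq_sqrt (by positivity)
  have hcross : a * b + c ≤ √(a ^ 2 + c) * √(b ^ 2 + c) := by
    rw [← Real.sqrt_mul (by positivity)]
    -- Cauchy–Schwarz for the vectors `(a, √c)` and `(b, √c)`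
    refine Real.le_sqrt_of_sq_le ?_
    nlinarith [mul_nonneg hc (sq_nonneg (a - b))]
  nlinarith

lemma sq_add_four_mul_le_sq_length_step (l r x : ℝ) {c : ℝ} (hc : 0 ≤ c) :
    (l + r) ^ 2 + 4 * c ≤
      ((-x + √((l + x) ^ 2 + c)) + (x + √((r - x) ^ 2 + c))) ^ 2 := by
  convert sq_add_add_four_mul_le_sq_sqrt_add_sqrt (a := l + x) (b := r - x) hc using 2 <;> ring

lemma two_le_log_of_nine_le {n : ℝ} (hn : 9 ≤ n) : 2 ≤ Real.log n := by
  rw [Real.le_log_iff_exp_le (by linarith)]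
  calc Real.exp 2 = Real.exp 1 ^ 2 := by rw [← Real.exp_nat_mul]; norm_num
    _ ≤ 9 := by nlinarith [Real.exp_one_lt_d9, Real.exp_pos 1]
    _ ≤ n := hn

lemma exists_nat_pow_six_le_four_mul {ℓ : ℝ} (hℓ : 2 ≤ ℓ) :
    ∃ i : ℕ, 1 ≤ i ∧ (i : ℝ) ≤ ℓ ^ 7 ∧ ℓ ^ 6 ≤ 4 * i := by
  have hpos : 0 < ℓ ^ 6 / 4 := by positivity
  refine ⟨⌈ℓ ^ 6 / 4⌉₊, Nat.ceil_pos.mpr hpos, ?_, ?_⟩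
  · have h64 : (2 : ℝ) ^ 6 ≤ ℓ ^ 6 := pow_le_pow_left₀ (by norm_num) hℓ 6
    have h7 : 2 * ℓ ^ 6 ≤ ℓ ^ 7 := by
      rw [pow_succ ℓ 6, mul_comm]; gcongr
    linarith [Nat.ceil_lt_add_one hpos.le]
  · linarith [Nat.le_ceil (ℓ ^ 6 / 4)]

namespace ConstrainedHL

variable {Ω : Type*} {mΩ : MeasurableSpace Ω} {P : Measure Ω} {n : ℕ}
  {F : Filtration ℕ mΩ} {L R x : ℕ → Ω → ℝ}

lemma length_nonneg (h : ConstrainedHL P n F L R x) {k : ℕ} (hk : 1 ≤ k) (ω : Ω) :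
    0 ≤ L k ω + R k ω := by
  have hx := h.mem_interval k hk ω
  linarith [hx.1, hx.2]

lemma four_mul_div_le_sq_length (h : ConstrainedHL P n F L R x) (hn : 0 < n) {k : ℕ}
    (hk : 1 ≤ k) (ω : Ω) : 4 * (k : ℝ) / n ≤ (L k ω + R k ω) ^ 2 := by
  have hn' : (0 : ℝ) < n := by exact_mod_cast hn
  induction k, hk using Nat.le_induction with
  | base =>
    rw [h.init_L, h.init_R, ← add_div, div_pow, Real.sq_sqrt hn'.le]
    norm_num
  | succ k hk ih =>
    rw [h.recur_L k hk ω, h.recur_R k hk ω]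
    have step := sq_add_four_mul_le_sq_length_step (L k ω) (R k ω) (x (k + 1) ω)
      (by positivity : (0 : ℝ) ≤ 1 / n)
    push_cast
    calc 4 * ((k : ℝ) + 1) / n = 4 * (k : ℝ) / n + 4 * (1 / n) := by ring
      _ ≤ _ := by linarith

end ConstrainedHL

/-- Deterministic bound on the time to reach minimal length.
There is an absolute `n₀` such that for all `n ≥ n₀`, almost surely
`T₁ ≤ (log n)⁷`, where `T₁ = inf{i ≥ 1 : λ_i ≥ (log n)³/√n}`; i.e. almost surely
there is some `i` with `1 ≤ i ≤ (log n)⁷` and `λ_i ≥ (log n)³/√n`. -/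
theorem statement13 :
    ∃ n₀ : ℕ, ∀ n : ℕ, n₀ ≤ n →
    ∀ (Ω : Type) (mΩ : MeasurableSpace Ω) (P : Measure Ω)
      (F : Filtration ℕ mΩ) (L R x : ℕ → Ω → ℝ),
      ConstrainedHL P n F L R x →
      ∀ᵐ ω ∂P, ∃ i : ℕ, 1 ≤ i ∧ (i : ℝ) ≤ (Real.log n) ^ 7 ∧
        (Real.log n) ^ 3 / Real.sqrt n ≤ L i ω + R i ω := by
  refine ⟨9, fun n hn Ω mΩ P F L R x hC => ?_⟩
  have hn' : (9 : ℝ) ≤ n := by exact_mod_cast hn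
  have hℓ := two_le_log_of_nine_le hn'
  obtain ⟨i, hi, hi7, hi6⟩ := exists_nat_pow_six_le_four_mul hℓ
  refine Eventually.of_forall fun ω => ⟨i, hi, hi7, le_of_sq_le_sq ?_ (hC.length_nonneg hi ω)⟩
  calc (Real.log n ^ 3 / √n) ^ 2 = Real.log n ^ 6 / n := by
        rw [div_pow, ← pow_mul, Real.sq_sqrt (by linarith)]
    _ ≤ 4 * (i : ℝ) / n := by gcongr
    _ ≤ _ := hC.four_mul_div_le_sq_length (by omega) hi ω
end
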